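/- arXiv:2106.07094 — 5 statements merged into one kernel-verified Lean document; each statement's English description precedes it below -/
import Mathlib

section
/- Let f : ℝ^d → ℝ be convex and L-smooth (differentiable with L-Lipschitz gradient, L > 0), bounded below with f* := inf f. Let w_0 ∈ ℝ^d and define gradient-descent iterates w_{τ+1} = w_τ − η ∇f(w_τ) with step size 0 < η ≤ 1/(2L). Then for every w* ∈ ℝ^d and every positive integer E, with Δ := f(w*) − f*, it holds that ‖w_E − w*‖² ≤ ‖w_0 − w*‖² − (η/(2L)) Σ_{τ=0}^{E−1} ‖∇f(w_τ)‖² + 2 η E Δ. -/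
/-!
Expanding the square, one gradient step changes `‖w - w*‖²` by
`-2η ⟪∇f w, w - w*⟫ + η² ‖∇f w‖²`. Convexity bounds the inner product below by `f w - f w*`,
and the descent lemma applied to the step `w - L⁻¹ ∇f w` gives `‖∇f w‖² ≤ 2L (f w - f*)`.
Since `η ≤ 1/(2L)`, each step decreases the squared distance by at least `(η/2L) ‖∇f w‖²`
up to the slack `2η (f w* - f*)`, and the per-step bounds telescope.
-/

open scoped RealInnerProductSpace
open Set

section Smooth

variable {E : Type*} [NormedAddCommGroup E] [InnerProductSpace ℝ E] [CompleteSpace E] {f : E → ℝ}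

theorem hasDerivAt_comp_add_smul {x v : E} {t : ℝ} (hf : DifferentiableAt ℝ f (x + t • v)) :
    HasDerivAt (fun s : ℝ => f (x + s • v)) ⟪gradient f (x + t • v), v⟫ t := by
  have hline : HasDerivAt (fun s : ℝ => x + s • v) v t := by
    simpa using ((hasDerivAt_id t).smul_const v).const_add x
  have hgrad := hf.hasGradientAt
  rw [hasGradientAt_iff_hasFDerivAt] at hgrad
  simpa [InnerProductSpace.toDual_apply_apply, Function.comp_def] using
    hgrad.comp_hasDerivAt t hline

theorem ConvexOn.add_inner_gradient_le (hconv : ConvexOn ℝ univ f) {x : E}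
    (hf : DifferentiableAt ℝ f x) (y : E) : f x + ⟪gradient f x, y - x⟫ ≤ f y := by
  have hline : ConvexOn ℝ univ (fun t : ℝ => f (x + t • (y - x))) := by
    have hcomp : (fun t : ℝ => f (x + t • (y - x))) = f ∘ AffineMap.lineMap x y := by
      ext t
      rw [Function.comp_apply, AffineMap.lineMap_apply_module', add_comm]
    simpa [hcomp] using hconv.comp_affineMap (AffineMap.lineMap x y)
  have hslope := hline.le_slope_of_hasDerivAt (mem_univ 0) (mem_univ 1) one_pos
    (hasDerivAt_comp_add_smul (by simpa using hf))
  simp only [slope_def_field, zero_smul, add_zero, one_smul, add_sub_cancel, sub_zero,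
    div_one] at hslope
  linarith

theorem le_add_inner_gradient_add_sq {L : ℝ} (hf : Differentiable ℝ f)
    (hlip : ∀ x y, ‖gradient f x - gradient f y‖ ≤ L * ‖x - y‖) (x y : E) :
    f y ≤ f x + ⟪gradient f x, y - x⟫ + L / 2 * ‖y - x‖ ^ 2 := by
  set v := y - x
  -- `g` has derivative `⟪∇f (x + t v) - ∇f x, v⟫ - L t ‖v‖² ≤ 0` for `t ≥ 0`
  let g : ℝ → ℝ := fun t => f (x + t • v) - t * ⟪gradient f x, v⟫ - L / 2 * t ^ 2 * ‖v‖ ^ 2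
  have hg : ∀ t, HasDerivAt g
      (⟪gradient f (x + t • v) - gradient f x, v⟫ - L * t * ‖v‖ ^ 2) t := by
    intro t
    refine (((hasDerivAt_comp_add_smul (hf _)).sub ((hasDerivAt_id t).mul_const _)).sub
      (((hasDerivAt_pow 2 t).const_mul (L / 2)).mul_const (‖v‖ ^ 2))).congr_deriv ?_
    rw [inner_sub_left]
    ring
  have hanti : AntitoneOn g (Ici 0) := by
    refine antitoneOn_of_deriv_nonpos (convex_Ici 0)
      (fun t _ => (hg t).continuousAt.continuousWithinAt)
      (fun t _ => (hg t).differentiableAt.differentiableWithinAt) fun t ht => ?_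
    rw [interior_Ici, mem_Ioi] at ht
    rw [(hg t).deriv, sub_nonpos]
    calc ⟪gradient f (x + t • v) - gradient f x, v⟫
        ≤ ‖gradient f (x + t • v) - gradient f x‖ * ‖v‖ := real_inner_le_norm _ _
      _ ≤ L * ‖x + t • v - x‖ * ‖v‖ := by gcongr; exact hlip _ _
      _ = L * t * ‖v‖ ^ 2 := by
        rw [add_sub_cancel_left, norm_smul, Real.norm_of_nonneg ht.le]; ring
  have hg01 : g 1 ≤ g 0 := hanti self_mem_Ici (mem_Ici.2 zero_le_one) zero_le_one
  simp only [g, zero_smul, add_zero, one_smul, zero_mul, one_mul, sub_zero, v,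
    add_sub_cancel] at hg01
  linarith

theorem sq_norm_gradient_le {L m : ℝ} (hL : 0 < L) (hf : Differentiable ℝ f)
    (hlip : ∀ x y, ‖gradient f x - gradient f y‖ ≤ L * ‖x - y‖) (hm : ∀ y, m ≤ f y) (x : E) :
    ‖gradient f x‖ ^ 2 ≤ 2 * L * (f x - m) := by
  have hstep := le_add_inner_gradient_add_sq hf hlip x (x - L⁻¹ • gradient f x)
  rw [sub_sub_cancel_left, inner_neg_right, real_inner_smul_right, real_inner_self_eq_norm_sq,
    norm_neg, norm_smul, Real.norm_of_nonneg (inv_nonneg.2 hL.le)] at hstep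
  calc ‖gradient f x‖ ^ 2
      = 2 * L * (L⁻¹ * ‖gradient f x‖ ^ 2 - L / 2 * (L⁻¹ * ‖gradient f x‖) ^ 2) := by
        field_simp; ring
    _ ≤ 2 * L * (f x - m) := by
        refine mul_le_mul_of_nonneg_left ?_ (by positivity)
        linarith [hm (x - L⁻¹ • gradient f x)]

theorem sq_norm_sub_smul_gradient_sub_le {L η m : ℝ} (hL : 0 < L) (hconv : ConvexOn ℝ univ f)
    (hf : Differentiable ℝ f) (hlip : ∀ x y, ‖gradient f x - gradient f y‖ ≤ L * ‖x - y‖)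
    (hm : ∀ y, m ≤ f y) (hη0 : 0 ≤ η) (hη : η ≤ 1 / (2 * L)) (x z : E) :
    ‖x - η • gradient f x - z‖ ^ 2 ≤
      ‖x - z‖ ^ 2 - η / (2 * L) * ‖gradient f x‖ ^ 2 + 2 * η * (f z - m) := by
  set g := gradient f x
  have hexpand : ‖x - η • g - z‖ ^ 2 = ‖x - z‖ ^ 2 - 2 * η * ⟪g, x - z⟫ + η ^ 2 * ‖g‖ ^ 2 := by
    rw [sub_right_comm, norm_sub_sq_real, real_inner_smul_right, norm_smul,
      Real.norm_of_nonneg hη0, real_inner_comm]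
    ring
  have hfirst : f x - f z ≤ ⟪g, x - z⟫ := by
    have := hconv.add_inner_gradient_le (hf x) z
    rw [← neg_sub, inner_neg_right] at this
    linarith
  have hgrad : η / L * ‖g‖ ^ 2 ≤ 2 * η * (f x - m) := by
    calc η / L * ‖g‖ ^ 2 ≤ η / L * (2 * L * (f x - m)) := by
          gcongr; exact sq_norm_gradient_le hL hf hlip hm x
      _ = 2 * η * (f x - m) := by field_simp
  have hη2 : η ^ 2 ≤ η / (2 * L) := by
    calc η ^ 2 = η * η := sq η
      _ ≤ η * (1 / (2 * L)) := by gcongr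
      _ = η / (2 * L) := by ring
  have hfirstη := mul_le_mul_of_nonneg_left hfirst (by positivity : 0 ≤ 2 * η)
  have hη2g := mul_le_mul_of_nonneg_right hη2 (sq_nonneg ‖g‖)
  have hhalf : η / L * ‖g‖ ^ 2 = 2 * (η / (2 * L) * ‖g‖ ^ 2) := by field_simp
  linarith

end Smooth

theorem le_sub_sum_range_add_mul_of_succ_le {a b : ℕ → ℝ} {c : ℝ}
    (h : ∀ n, a (n + 1) ≤ a n - b n + c) (n : ℕ) :
    a n ≤ a 0 - ∑ i ∈ Finset.range n, b i + n * c := by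
  induction n with
  | zero => simp
  | succ n ih =>
    rw [Finset.sum_range_succ]
    push_cast
    linarith [h n]

theorem stmt_0_general {d : ℕ} (f : EuclideanSpace ℝ (Fin d) → ℝ) (L : ℝ) (hL : 0 < L)
    (hconv : ConvexOn ℝ Set.univ f)
    (hdiff : Differentiable ℝ f)
    (hlip : ∀ x y, ‖gradient f x - gradient f y‖ ≤ L * ‖x - y‖)
    (fstar : ℝ) (hfstar : IsGLB (Set.range f) fstar)
    (η : ℝ) (hη0 : 0 < η) (hη : η ≤ 1 / (2 * L))
    (w : ℕ → EuclideanSpace ℝ (Fin d))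
    (hw : ∀ τ, w (τ + 1) = w τ - η • gradient f (w τ))
    (wstar : EuclideanSpace ℝ (Fin d)) (E : ℕ) :
    ‖w E - wstar‖ ^ 2 ≤
      ‖w 0 - wstar‖ ^ 2
        - (η / (2 * L)) * ∑ τ ∈ Finset.range E, ‖gradient f (w τ)‖ ^ 2
        + 2 * η * (E : ℝ) * (f wstar - fstar) := by
  have hstep (τ : ℕ) := hw τ ▸ sq_norm_sub_smul_gradient_sub_le hL hconv hdiff hlip
    (fun y => hfstar.1 ⟨y, rfl⟩) hη0.le hη (w τ) wstar
  have htele := le_sub_sum_range_add_mul_of_succ_le (a := fun τ => ‖w τ - wstar‖ ^ 2)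
    (b := fun τ => η / (2 * L) * ‖gradient f (w τ)‖ ^ 2) hstep E
  rw [← Finset.mul_sum] at htele
  linarith

/-- Lemma F.1: descent of distance to any point under gradient descent on a
convex, `L`-smooth function, up to heterogeneity slack `Δ = f w* - f*`. -/
theorem stmt_0 {d : ℕ} (f : EuclideanSpace ℝ (Fin d) → ℝ) (L : ℝ) (hL : 0 < L)
    (hconv : ConvexOn ℝ Set.univ f)
    (hdiff : Differentiable ℝ f)
    (hlip : ∀ x y, ‖gradient f x - gradient f y‖ ≤ L * ‖x - y‖)
    (fstar : ℝ) (hfstar : IsGLB (Set.range f) fstar)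
    (η : ℝ) (hη0 : 0 < η) (hη : η ≤ 1 / (2 * L))
    (w : ℕ → EuclideanSpace ℝ (Fin d))
    (hw : ∀ τ, w (τ + 1) = w τ - η • gradient f (w τ))
    (wstar : EuclideanSpace ℝ (Fin d)) (E : ℕ) (hE : 0 < E) :
    ‖w E - wstar‖ ^ 2 ≤
      ‖w 0 - wstar‖ ^ 2
        - (η / (2 * L)) * ∑ τ ∈ Finset.range E, ‖gradient f (w τ)‖ ^ 2
        + 2 * η * (E : ℝ) * (f wstar - fstar) :=
  stmt_0_general f L hL hconv hdiff hlip fstar hfstar η hη0 hη w hw wstar E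
end

section
/- Let f : ℝ^d → ℝ be L-smooth (differentiable with L-Lipschitz gradient, L > 0) and bounded below with f* := inf f. Let w_0 ∈ ℝ^d and define gradient-descent iterates w_{τ+1} = w_τ − η ∇f(w_τ) with step size 0 < η ≤ 1/L. Then for every integer τ ≥ 1, ‖w_0 − w_τ‖² ≤ 2 η² L τ² (f(w_0) − f*); consequently, for every positive integer E, the update u := Σ_{τ=0}^{E−1} ∇f(w_τ) satisfies ‖u‖² ≤ 2 L E² (f(w_0) − f*). -/
/-!
Along a segment `t ↦ x + t • v`, Lipschitz continuity of `∇f` makes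
`t ↦ f (x + t • v) - t * ⟪∇f x, v⟫ - L / 2 * t ^ 2 * ‖v‖ ^ 2` antitone for `t ≥ 0`; this is
the descent lemma `f y ≤ f x + ⟪∇f x, y - x⟫ + L / 2 * ‖y - x‖ ^ 2`. Applied to a gradient
step it shows that `f` decreases along the iterates, and applied to the step of length `1 / L`
together with `f ≥ f*` it bounds `‖∇f x‖ ^ 2 ≤ 2 L (f x - f*)`. Hence every gradient along the
trajectory has squared norm at most `2 L (f w₀ - f*)`, and both bounds follow from
`w₀ - w_τ = η ∑_{i < τ} ∇f(w_i)`.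
-/

open scoped RealInnerProductSpace

open Finset

theorem norm_sum_sq_le_card_sq_mul {ι E : Type*} [SeminormedAddCommGroup E] (s : Finset ι)
    (g : ι → E) {C : ℝ} (hC : ∀ i ∈ s, ‖g i‖ ^ 2 ≤ C) :
    ‖∑ i ∈ s, g i‖ ^ 2 ≤ (#s : ℝ) ^ 2 * C :=
  calc ‖∑ i ∈ s, g i‖ ^ 2 ≤ (∑ i ∈ s, ‖g i‖) ^ 2 := by gcongr; exact norm_sum_le _ _
    _ ≤ #s * ∑ i ∈ s, ‖g i‖ ^ 2 := sq_sum_le_card_mul_sum_sq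
    _ ≤ #s * ∑ _i ∈ s, C := by gcongr with i hi; exact hC i hi
    _ = (#s : ℝ) ^ 2 * C := by rw [sum_const, nsmul_eq_mul]; ring

section GradientDescent

variable {F : Type*} [NormedAddCommGroup F] [InnerProductSpace ℝ F] [CompleteSpace F]
  {f : F → ℝ} {L : ℝ}

theorem hasDerivAt_apply_add_smul {x v : F} {t : ℝ} (hf : DifferentiableAt ℝ f (x + t • v)) :
    HasDerivAt (fun s : ℝ => f (x + s • v)) ⟪gradient f (x + t • v), v⟫ t := by
  have hline : HasDerivAt (fun s : ℝ => x + s • v) v t := by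
    simpa using ((hasDerivAt_id t).smul_const v).const_add x
  exact (hasGradientAt_iff_hasFDerivAt.mp hf.hasGradientAt).comp_hasDerivAt t hline

theorem apply_le_add_inner_gradient_add_sq (hf : Differentiable ℝ f) (x : F)
    (hlip : ∀ y, ‖gradient f y - gradient f x‖ ≤ L * ‖y - x‖) (y : F) :
    f y ≤ f x + ⟪gradient f x, y - x⟫ + L / 2 * ‖y - x‖ ^ 2 := by
  set v := y - x
  set φ : ℝ → ℝ := fun t => f (x + t • v) - t * ⟪gradient f x, v⟫ - L / 2 * t ^ 2 * ‖v‖ ^ 2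
  have hderiv : ∀ t, HasDerivAt φ
      (⟪gradient f (x + t • v), v⟫ - ⟪gradient f x, v⟫ - L * t * ‖v‖ ^ 2) t := fun t => by
    have := (((hasDerivAt_apply_add_smul (v := v) (hf (x + t • v))).sub
      ((hasDerivAt_id t).mul_const ⟪gradient f x, v⟫)).sub
      (((hasDerivAt_pow 2 t).const_mul (L / 2)).mul_const (‖v‖ ^ 2)))
    refine this.congr_deriv ?_
    simp only [Nat.cast_ofNat, Nat.add_one_sub_one, pow_one, one_mul]
    ring
  have hderiv_nonpos : ∀ t ∈ interior (Set.Ici (0 : ℝ)),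
      ⟪gradient f (x + t • v), v⟫ - ⟪gradient f x, v⟫ - L * t * ‖v‖ ^ 2 ≤ 0 := by
    intro t ht
    rw [interior_Ici] at ht
    have hstep : ‖(x + t • v) - x‖ = t * ‖v‖ := by
      rw [add_sub_cancel_left, norm_smul, Real.norm_of_nonneg ht.le]
    calc ⟪gradient f (x + t • v), v⟫ - ⟪gradient f x, v⟫ - L * t * ‖v‖ ^ 2
        = ⟪gradient f (x + t • v) - gradient f x, v⟫ - L * t * ‖v‖ ^ 2 := by
          rw [inner_sub_left]
      _ ≤ ‖gradient f (x + t • v) - gradient f x‖ * ‖v‖ - L * t * ‖v‖ ^ 2 := by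
          gcongr; exact real_inner_le_norm _ _
      _ ≤ L * ‖(x + t • v) - x‖ * ‖v‖ - L * t * ‖v‖ ^ 2 := by
          gcongr; exact hlip _
      _ = 0 := by rw [hstep]; ring
  have hanti : AntitoneOn φ (Set.Ici 0) :=
    antitoneOn_of_hasDerivWithinAt_nonpos (convex_Ici 0)
      (fun t _ => (hderiv t).continuousAt.continuousWithinAt)
      (fun t _ => (hderiv t).hasDerivWithinAt) hderiv_nonpos
  have h10 : φ 1 ≤ φ 0 := hanti Set.self_mem_Ici (by norm_num) zero_le_one
  simp only [φ, v, one_smul, zero_smul, add_zero, add_sub_cancel] at h10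
  linarith

theorem apply_sub_smul_gradient_le (hf : Differentiable ℝ f)
    (hlip : ∀ x y, ‖gradient f x - gradient f y‖ ≤ L * ‖x - y‖) (x : F) (η : ℝ) :
    f (x - η • gradient f x) ≤ f x - η * (1 - L * η / 2) * ‖gradient f x‖ ^ 2 := by
  have h := apply_le_add_inner_gradient_add_sq hf x (fun y => hlip y x) (x - η • gradient f x)
  rw [sub_sub_cancel_left, inner_neg_right, real_inner_smul_right, real_inner_self_eq_norm_sq,
    norm_neg, norm_smul, mul_pow, Real.norm_eq_abs, sq_abs] at h
  linarith

theorem norm_gradient_sq_le (hf : Differentiable ℝ f)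
    (hlip : ∀ x y, ‖gradient f x - gradient f y‖ ≤ L * ‖x - y‖) (hL : 0 < L)
    {m : ℝ} (hlb : ∀ z, m ≤ f z) (x : F) :
    ‖gradient f x‖ ^ 2 ≤ 2 * L * (f x - m) := by
  have h := apply_sub_smul_gradient_le hf hlip x L⁻¹
  have hcoef : L⁻¹ * (1 - L * L⁻¹ / 2) = (2 * L)⁻¹ := by field_simp; ring
  rw [hcoef] at h
  have := hlb (x - L⁻¹ • gradient f x)
  rw [← inv_mul_le_iff₀ (by positivity)]
  linarith

theorem sub_gradientDescent_eq_smul_sum {η : ℝ} {w : ℕ → F}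
    (hw : ∀ τ, w (τ + 1) = w τ - η • gradient f (w τ))
    (n : ℕ) : w 0 - w n = η • ∑ i ∈ range n, gradient f (w i) := by
  induction n with
  | zero => simp
  | succ n ih => rw [hw n, sum_range_succ, smul_add, ← ih]; abel

theorem antitone_apply_gradientDescent {η : ℝ} {w : ℕ → F} (hf : Differentiable ℝ f)
    (hlip : ∀ x y, ‖gradient f x - gradient f y‖ ≤ L * ‖x - y‖) (hη : 0 ≤ η) (hηL : L * η ≤ 2)
    (hw : ∀ τ, w (τ + 1) = w τ - η • gradient f (w τ)) :
    Antitone (f ∘ w) :=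
  antitone_nat_of_succ_le fun τ => by
    have h := apply_sub_smul_gradient_le hf hlip (w τ) η
    have hcoef : 0 ≤ η * (1 - L * η / 2) := mul_nonneg hη (by linarith)
    rw [← hw τ] at h
    simp only [Function.comp_apply]
    nlinarith [sq_nonneg ‖gradient f (w τ)‖]

end GradientDescent

/-- Lemma F.2: bound on the drift of the iterates and on the update norm for an
`L`-smooth function bounded below. -/
theorem stmt_2 {d : ℕ} (f : EuclideanSpace ℝ (Fin d) → ℝ) (L : ℝ) (hL : 0 < L)
    (hdiff : Differentiable ℝ f)
    (hlip : ∀ x y, ‖gradient f x - gradient f y‖ ≤ L * ‖x - y‖)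
    (fstar : ℝ) (hfstar : IsGLB (Set.range f) fstar)
    (η : ℝ) (hη0 : 0 < η) (hη : η ≤ 1 / L)
    (w : ℕ → EuclideanSpace ℝ (Fin d))
    (hw : ∀ τ, w (τ + 1) = w τ - η • gradient f (w τ)) :
    (∀ τ : ℕ, 1 ≤ τ →
      ‖w 0 - w τ‖ ^ 2 ≤ 2 * η ^ 2 * L * (τ : ℝ) ^ 2 * (f (w 0) - fstar)) ∧
    (∀ E : ℕ, 0 < E →
      ‖∑ τ ∈ Finset.range E, gradient f (w τ)‖ ^ 2 ≤
        2 * L * (E : ℝ) ^ 2 * (f (w 0) - fstar)) := by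
  have hlb : ∀ z, fstar ≤ f z := fun z => hfstar.1 ⟨z, rfl⟩
  have hηL : L * η ≤ 2 := by linarith [(le_div_iff₀' hL).mp hη]
  have hdecr := antitone_apply_gradientDescent hdiff hlip hη0.le hηL hw
  have hgrad : ∀ τ, ‖gradient f (w τ)‖ ^ 2 ≤ 2 * L * (f (w 0) - fstar) := fun τ =>
    (norm_gradient_sq_le hdiff hlip hL hlb (w τ)).trans (by
      gcongr; exact hdecr (Nat.zero_le τ))
  have hsum : ∀ n : ℕ, ‖∑ τ ∈ range n, gradient f (w τ)‖ ^ 2 ≤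
      (n : ℝ) ^ 2 * (2 * L * (f (w 0) - fstar)) := fun n => by
    simpa using norm_sum_sq_le_card_sq_mul (range n) _ fun τ _ => hgrad τ
  refine ⟨fun τ _ => ?_, fun E _ => ?_⟩
  · rw [sub_gradientDescent_eq_smul_sum hw, norm_smul, mul_pow, Real.norm_eq_abs, sq_abs]
    nlinarith [hsum τ, sq_nonneg η]
  · linarith [hsum E]
end

section
/- Let f : ℝ^d → ℝ be L-smooth (differentiable with L-Lipschitz gradient, L > 0). Let E be a positive integer, let w_0 ∈ ℝ^d, and define gradient-descent iterates w_{τ+1} = w_τ − η ∇f(w_τ) with step size 0 < η ≤ 1/(2LE). Then for every integer τ with 1 ≤ τ ≤ E, ‖w_0 − w_τ‖ ≤ 2 η τ ‖∇f(w_0)‖. -/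
open scoped RealInnerProductSpace

/-- Lemma F.4: stronger drift bound for `L`-smooth `f` under the stepsize
condition `η ≤ 1/(2LE)`. -/
theorem stmt_4 {d : ℕ} (f : EuclideanSpace ℝ (Fin d) → ℝ) (L : ℝ) (hL : 0 < L)
    (hdiff : Differentiable ℝ f)
    (hlip : ∀ x y, ‖gradient f x - gradient f y‖ ≤ L * ‖x - y‖)
    (E : ℕ) (hE : 0 < E)
    (η : ℝ) (hη0 : 0 < η) (hη : η ≤ 1 / (2 * L * (E : ℝ)))
    (w : ℕ → EuclideanSpace ℝ (Fin d))
    (hw : ∀ τ, w (τ + 1) = w τ - η • gradient f (w τ)) :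
    ∀ τ : ℕ, 1 ≤ τ → τ ≤ E →
      ‖w 0 - w τ‖ ≤ 2 * η * (τ : ℝ) * ‖gradient f (w 0)‖ := by
  set G := ‖gradient f (w 0)‖ with hG
  have hG0 : 0 ≤ G := norm_nonneg _
  have hEpos : (0:ℝ) < (E:ℝ) := by exact_mod_cast hE
  have hηLE : 2 * L * (E:ℝ) * η ≤ 1 := by
    have h2 : 0 < 2 * L * (E:ℝ) := by positivity
    calc 2 * L * (E:ℝ) * η ≤ 2 * L * (E:ℝ) * (1 / (2 * L * (E:ℝ))) := by
          exact mul_le_mul_of_nonneg_left hη (le_of_lt h2)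
      _ = 1 := by field_simp
  have key : ∀ τ : ℕ, τ ≤ E → ‖w 0 - w τ‖ ≤ 2 * η * (τ : ℝ) * G := by
    intro τ
    induction τ with
    | zero => intro _; simp
    | succ n ih =>
      intro h
      have hn : n ≤ E := Nat.le_of_succ_le h
      have h1 := ih hn
      have hgn : ‖gradient f (w n)‖ ≤ G + L * ‖w 0 - w n‖ := by
        calc ‖gradient f (w n)‖
            ≤ ‖gradient f (w 0)‖ + ‖gradient f (w n) - gradient f (w 0)‖ := by
              have := norm_add_le (gradient f (w 0)) (gradient f (w n) - gradient f (w 0))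
              simpa using this
          _ ≤ G + L * ‖w n - w 0‖ := by
              exact add_le_add le_rfl (hlip (w n) (w 0))
          _ = G + L * ‖w 0 - w n‖ := by rw [norm_sub_rev]
      have hstep : ‖w 0 - w (n+1)‖ ≤ ‖w 0 - w n‖ + η * ‖gradient f (w n)‖ := by
        rw [hw n]
        have : w 0 - (w n - η • gradient f (w n)) = (w 0 - w n) + η • gradient f (w n) := by
          abel
        rw [this]
        calc ‖(w 0 - w n) + η • gradient f (w n)‖
            ≤ ‖w 0 - w n‖ + ‖η • gradient f (w n)‖ := norm_add_le _ _
          _ = ‖w 0 - w n‖ + η * ‖gradient f (w n)‖ := by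
              rw [norm_smul, Real.norm_eq_abs, abs_of_pos hη0]
      have hnE : (n:ℝ) ≤ (E:ℝ) := by exact_mod_cast hn
      have hLn : 2 * L * η * (n:ℝ) ≤ 1 := by
        nlinarith [hηLE, hη0.le, hL.le]
      have hwn0 : 0 ≤ ‖w 0 - w n‖ := norm_nonneg _
      push_cast
      nlinarith [mul_le_mul_of_nonneg_left h1 (mul_pos hη0 hL).le,
        mul_le_mul_of_nonneg_left hgn hη0.le, mul_nonneg hη0.le hG0,
        mul_nonneg (mul_nonneg hη0.le hL.le) hwn0,
        mul_nonneg (mul_nonneg (mul_nonneg hη0.le hη0.le) hG0) (Nat.cast_nonneg n)]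
  intro τ _ hτE
  exact key τ hτE
end

section
/- Let x be a real number with 0 < x < 1, and let m be a positive integer with m·x ≤ 1/4. Then (1 − (1 − x)^m)/x ≤ m·(1 − (11(m−1)/24)·x). -/
lemma cube_fact_nonneg (n : ℕ) : (0:ℝ) ≤ (n:ℝ) * ((n:ℝ) - 1) * ((n:ℝ) - 2) := by
  rcases Nat.lt_or_ge n 2 with h | h
  · interval_cases n <;> norm_num
  · have h2 : (2:ℝ) ≤ (n:ℝ) := by exact_mod_cast h
    have := mul_nonneg (mul_nonneg (by linarith : (0:ℝ) ≤ (n:ℝ))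
      (by linarith : (0:ℝ) ≤ (n:ℝ) - 1)) (by linarith : (0:ℝ) ≤ (n:ℝ) - 2)
    linarith

lemma cubic_lower (x : ℝ) (hx0 : 0 < x) (hx1 : x < 1) (m : ℕ) :
    1 - (m:ℝ) * x + (m:ℝ) * ((m:ℝ) - 1) / 2 * x ^ 2
      - (m:ℝ) * ((m:ℝ) - 1) * ((m:ℝ) - 2) / 6 * x ^ 3 ≤ (1 - x) ^ m := by
  induction m with
  | zero => simp
  | succ n ih =>
    have hpow : (1 - x) ^ (n + 1) = (1 - x) ^ n * (1 - x) := pow_succ _ _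
    have hmul := mul_le_mul_of_nonneg_right ih (by linarith : (0:ℝ) ≤ 1 - x)
    have hn := cube_fact_nonneg n
    have hx4 : (0:ℝ) ≤ x ^ 4 := by positivity
    push_cast
    nlinarith [mul_nonneg hn hx4]

/-- Fact F.6: sharpened geometric-sum estimate. -/
theorem stmt_5 (x : ℝ) (hx0 : 0 < x) (hx1 : x < 1)
    (m : ℕ) (hm : 0 < m) (hmx : (m : ℝ) * x ≤ 1 / 4) :
    (1 - (1 - x) ^ m) / x ≤ (m : ℝ) * (1 - (11 * ((m : ℝ) - 1) / 24) * x) := by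
  rw [div_le_iff₀ hx0]
  have hlow := cubic_lower x hx0 hx1 m
  have hm1 : (1:ℝ) ≤ (m:ℝ) := by exact_mod_cast hm
  have hx2 : (0:ℝ) < x ^ 2 := by positivity
  have hA : (0:ℝ) ≤ (m:ℝ) * ((m:ℝ) - 1) * x ^ 2 :=
    mul_nonneg (mul_nonneg (by linarith) (by linarith)) hx2.le
  have hB : (0:ℝ) ≤ 1/24 - ((m:ℝ) - 2) * x / 6 := by nlinarith
  nlinarith [mul_nonneg hA hB]
end

section
/- Let f : ℝ^d → ℝ be L-smooth (differentiable with L-Lipschitz gradient, L > 0). Let E be a positive integer, let w_0 ∈ ℝ^d, define gradient-descent iterates w_{τ+1} = w_τ − η ∇f(w_τ), and assume η L E ≤ 1/4. Then for every integer τ with 1 ≤ τ ≤ E, ‖∇f(w_τ)‖ ≥ ‖∇f(w_0)‖ / 2. -/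
open scoped RealInnerProductSpace

/-- Equation (cor-2.1-6) in the proof of Theorem 4.2: gradient norms along the
local trajectory stay at least half the initial gradient norm. -/
theorem stmt_14 {d : ℕ} (f : EuclideanSpace ℝ (Fin d) → ℝ) (L : ℝ) (hL : 0 < L)
    (hdiff : Differentiable ℝ f)
    (hlip : ∀ x y, ‖gradient f x - gradient f y‖ ≤ L * ‖x - y‖)
    (E : ℕ) (hE : 0 < E)
    (η : ℝ) (hη0 : 0 < η) (hη : η * L * (E : ℝ) ≤ 1 / 4)
    (w : ℕ → EuclideanSpace ℝ (Fin d))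
    (hw : ∀ τ, w (τ + 1) = w τ - η • gradient f (w τ)) :
    ∀ τ : ℕ, 1 ≤ τ → τ ≤ E →
      ‖gradient f (w τ)‖ ≥ ‖gradient f (w 0)‖ / 2 := by
  set G := ‖gradient f (w 0)‖ with hG
  have hG0 : 0 ≤ G := norm_nonneg _
  have key : ∀ τ : ℕ, τ ≤ E → ‖w τ - w 0‖ ≤ 2 * G * (η * τ) := by
    intro τ
    induction τ with
    | zero => simp
    | succ n ih =>
      intro hn1
      have hnE : (n : ℝ) ≤ (E : ℝ) := by exact_mod_cast Nat.le_of_succ_le hn1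
      have ihn := ih (Nat.le_of_succ_le hn1)
      -- bound on gradient at w n
      have hlip0 := hlip (w n) (w 0)
      have hgn : ‖gradient f (w n)‖ ≤ 2 * G := by
        have h1 : ‖gradient f (w n)‖ ≤ G + L * ‖w n - w 0‖ := by
          have := norm_sub_norm_le (gradient f (w n)) (gradient f (w 0))
          linarith
        have h2 : L * ‖w n - w 0‖ ≤ L * (2 * G * (η * n)) :=
          mul_le_mul_of_nonneg_left ihn (le_of_lt hL)
        have h3 : η * L * (n : ℝ) ≤ 1 / 4 := by
          have : η * L * (n : ℝ) ≤ η * L * (E : ℝ) := by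
            apply mul_le_mul_of_nonneg_left hnE
            positivity
          linarith
        nlinarith
      have hstep : ‖w (n + 1) - w 0‖ ≤ ‖w n - w 0‖ + η * ‖gradient f (w n)‖ := by
        rw [hw n]
        have : w n - η • gradient f (w n) - w 0 = (w n - w 0) - η • gradient f (w n) := by
          abel
        rw [this]
        calc ‖(w n - w 0) - η • gradient f (w n)‖
            ≤ ‖w n - w 0‖ + ‖η • gradient f (w n)‖ := norm_sub_le _ _
          _ = ‖w n - w 0‖ + η * ‖gradient f (w n)‖ := by
              rw [norm_smul, Real.norm_eq_abs, abs_of_pos hη0]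
      have : ‖w (n + 1) - w 0‖ ≤ 2 * G * (η * n) + η * (2 * G) := by
        nlinarith
      push_cast
      nlinarith
  intro τ h1 hτE
  have hkey := key τ hτE
  have hτE' : (τ : ℝ) ≤ (E : ℝ) := by exact_mod_cast hτE
  have hlip0 := hlip (w 0) (w τ)
  have hsymm : ‖w 0 - w τ‖ = ‖w τ - w 0‖ := norm_sub_rev _ _
  have h1' : G ≤ ‖gradient f (w τ)‖ + L * ‖w τ - w 0‖ := by
    have := norm_sub_norm_le (gradient f (w 0)) (gradient f (w τ))
    rw [hsymm] at hlip0
    linarith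
  have h3 : η * L * (τ : ℝ) ≤ 1 / 4 := by
    have : η * L * (τ : ℝ) ≤ η * L * (E : ℝ) := by
      apply mul_le_mul_of_nonneg_left hτE'
      positivity
    linarith
  nlinarith [mul_le_mul_of_nonneg_left hkey (le_of_lt hL)]
end
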